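/- For every real number x, ∑_{k=0}^∞ a_{2k+1} · x^{2k+1}/(2k+1)! = (1/2) ∫₀^∞ (g(x·t)³ − g(−x·t)³) · e^{−t} dt. -/

import Mathlib

/-!
Since `∏ᵢ 1/(kᵢ!)² = multinomial(k)²/(n!)²` when `k₁ + k₂ + k₃ = n`, the triple Cauchy product of
`g(y) = ∑ yⁿ/(n!)²` is `g(y)³ = ∑ aₙ yⁿ/(n!)²`, and `(g(y)³ - g(-y)³)/2` keeps exactly the odd
terms. As `∫₀^∞ tⁿ e^{-t} dt = n!`, the Laplace transform of `(xt)ⁿ/(n!)²` is `xⁿ/n!`, and it may be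
taken termwise: the multinomials of degree `n` sum to `3ⁿ`, so `aₙ ≤ 9ⁿ` and `∑ aₙ |x|ⁿ/n!`
converges.
-/

open MeasureTheory Real

/-- `a k` is the sum of squared multinomial coefficients over all triples
`(k₁,k₂,k₃)` of natural numbers with `k₁+k₂+k₃ = k`. -/
def a (k : ℕ) : ℕ :=
  ∑ p ∈ Finset.Nat.antidiagonalTuple 3 k, (Nat.multinomial Finset.univ p) ^ 2

/-- The entire function `g(y) = ∑ y^k/(k!)²`, so that `g(y) = I₀(2√y)` for `y ≥ 0`. -/
noncomputable def g (y : ℝ) : ℝ := ∑' k : ℕ, y ^ k / ((Nat.factorial k : ℝ)) ^ 2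

section TupleProduct

variable {R : Type*} [NormedCommRing R] {f : ℕ → R}

theorem summable_norm_prod_fin_tuple (hf : Summable fun n => ‖f n‖) :
    ∀ m : ℕ, Summable fun p : Fin m → ℕ => ‖∏ i, f (p i)‖
  | 0 => .of_finite
  | m + 1 => by
    refine (Fin.consEquiv fun _ => ℕ).summable_iff.mp ?_
    simpa [Function.comp_def, Fin.prod_univ_succ] using
      hf.mul_norm (summable_norm_prod_fin_tuple hf m)

variable [CompleteSpace R]

theorem hasSum_prod_fin_tuple (hf : Summable fun n => ‖f n‖) :
    ∀ m : ℕ, HasSum (fun p : Fin m → ℕ => ∏ i, f (p i)) ((∑' n, f n) ^ m)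
  | 0 => by simp
  | m + 1 => by
    refine (Fin.consEquiv fun _ => ℕ).hasSum_iff.mp ?_
    have := hf.of_norm.hasSum.mul (hasSum_prod_fin_tuple hf m)
      (hf.mul_norm (summable_norm_prod_fin_tuple hf m)).of_norm
    simpa [Function.comp_def, Fin.prod_univ_succ, pow_succ'] using this

theorem hasSum_sum_antidiagonalTuple_prod (hf : Summable fun n => ‖f n‖) (m : ℕ) :
    HasSum (fun n => ∑ p ∈ Finset.Nat.antidiagonalTuple m n, ∏ i, f (p i)) ((∑' n, f n) ^ m) :=
  ((Finset.Nat.sigmaAntidiagonalTupleEquivTuple m).hasSum_iff.mpr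
    (hasSum_prod_fin_tuple hf m)).sigma fun _ => Finset.hasSum _ _

end TupleProduct

theorem summable_norm_pow_div_factorial_sq (y : ℝ) :
    Summable fun k : ℕ => ‖y ^ k / (k.factorial : ℝ) ^ 2‖ := by
  refine (Real.summable_pow_div_factorial |y|).of_nonneg_of_le (fun _ => norm_nonneg _) fun k => ?_
  have hk : (1 : ℝ) ≤ k.factorial := mod_cast k.factorial_pos
  rw [norm_div, norm_pow, Real.norm_eq_abs, norm_pow, Real.norm_natCast]
  gcongr
  exact le_self_pow₀ hk two_ne_zero

theorem sum_antidiagonalTuple_prod_pow_div_factorial_sq (m n : ℕ) (y : ℝ) :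
    ∑ p ∈ Finset.Nat.antidiagonalTuple m n, ∏ i, y ^ p i / ((p i).factorial : ℝ) ^ 2
      = (∑ p ∈ Finset.Nat.antidiagonalTuple m n, Nat.multinomial Finset.univ p ^ 2 : ℕ)
          * y ^ n / (n.factorial : ℝ) ^ 2 := by
  push_cast
  rw [Finset.sum_mul, Finset.sum_div]
  refine Finset.sum_congr rfl fun p hp => ?_
  have hsum : ∑ i, p i = n := Finset.Nat.mem_antidiagonalTuple.mp hp
  have hspec : (∏ i, ((p i).factorial : ℝ)) * Nat.multinomial Finset.univ p = n.factorial := by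
    exact_mod_cast hsum ▸ Nat.multinomial_spec Finset.univ p
  rw [Finset.prod_div_distrib, Finset.prod_pow_eq_pow_sum, hsum, Finset.prod_pow, ← hspec]
  have : (0 : ℝ) < ∏ i, ((p i).factorial : ℝ) := by positivity
  have : (0 : ℝ) < Nat.multinomial Finset.univ p := mod_cast Nat.multinomial_pos _ _
  field_simp

theorem hasSum_g_cube (y : ℝ) :
    HasSum (fun n => (a n : ℝ) * y ^ n / (n.factorial : ℝ) ^ 2) (g y ^ 3) := by
  have h := hasSum_sum_antidiagonalTuple_prod (summable_norm_pow_div_factorial_sq y) 3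
  simp only [sum_antidiagonalTuple_prod_pow_div_factorial_sq] at h
  exact h

theorem sum_multinomial_antidiagonalTuple (m n : ℕ) :
    ∑ p ∈ Finset.Nat.antidiagonalTuple m n, Nat.multinomial Finset.univ p = m ^ n := by
  simpa [← Finset.piAntidiag_univ_fin_eq_antidiagonalTuple] using
    (Finset.sum_pow_eq_sum_piAntidiag (Finset.univ : Finset (Fin m)) (fun _ => (1 : ℕ)) n).symm

theorem sum_sq_multinomial_antidiagonalTuple_le (m n : ℕ) :
    ∑ p ∈ Finset.Nat.antidiagonalTuple m n, Nat.multinomial Finset.univ p ^ 2 ≤ (m ^ n) ^ 2 := by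
  rw [sq, ← sum_multinomial_antidiagonalTuple, Finset.sum_mul]
  refine Finset.sum_le_sum fun p hp => ?_
  rw [sq]
  gcongr
  exact Finset.single_le_sum (fun _ _ => Nat.zero_le _) hp

theorem a_le_nine_pow (n : ℕ) : a n ≤ 9 ^ n := by
  unfold a
  simpa [← pow_mul, pow_mul'] using sum_sq_multinomial_antidiagonalTuple_le 3 n

theorem integrableOn_pow_mul_exp_neg (n : ℕ) :
    IntegrableOn (fun t : ℝ => t ^ n * exp (-t)) (Set.Ioi 0) := by
  refine (Real.GammaIntegral_convergent (s := n + 1) (by positivity)).congr_fun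
    (fun t _ => ?_) measurableSet_Ioi
  simp [mul_comm]

theorem integral_pow_mul_exp_neg (n : ℕ) :
    ∫ t in Set.Ioi (0 : ℝ), t ^ n * exp (-t) = n.factorial := by
  rw [← Real.Gamma_nat_eq_factorial, Real.Gamma_eq_integral (by positivity)]
  refine setIntegral_congr_fun measurableSet_Ioi fun t _ => ?_
  simp [mul_comm]

theorem hasSum_integral_tsum_pow_div_factorial_sq_mul_exp_neg (c : ℕ → ℝ) (y : ℝ)
    (hc : Summable fun n => |c n| * |y| ^ n / n.factorial) :
    HasSum (fun n => c n * y ^ n / n.factorial)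
      (∫ t in Set.Ioi (0 : ℝ), (∑' n, c n * (y * t) ^ n / (n.factorial : ℝ) ^ 2) * exp (-t)) := by
  have h_int (b : ℝ) (n : ℕ) :
      ∫ t in Set.Ioi (0 : ℝ), b / (n.factorial : ℝ) ^ 2 * (t ^ n * exp (-t)) = b / n.factorial := by
    have : (n.factorial : ℝ) ≠ 0 := by positivity
    rw [integral_const_mul, integral_pow_mul_exp_neg]
    field_simp
  have h_norm (n : ℕ) :
      ∫ t in Set.Ioi (0 : ℝ), ‖c n * y ^ n / (n.factorial : ℝ) ^ 2 * (t ^ n * exp (-t))‖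
        = |c n| * |y| ^ n / n.factorial := by
    rw [← h_int]
    refine setIntegral_congr_fun measurableSet_Ioi fun t (ht : 0 < t) => ?_
    simp [abs_of_pos ht]
  have h_tsum (t : ℝ) : (∑' n, c n * (y * t) ^ n / (n.factorial : ℝ) ^ 2) * exp (-t)
      = ∑' n, c n * y ^ n / (n.factorial : ℝ) ^ 2 * (t ^ n * exp (-t)) := by
    rw [← tsum_mul_right]
    congr with n
    ring
  simp only [h_tsum]
  have h := hasSum_integral_of_summable_integral_norm
    (fun n => (integrableOn_pow_mul_exp_neg n).const_mul (c n * y ^ n / (n.factorial : ℝ) ^ 2))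
    (hc.congr fun n => (h_norm n).symm)
  simpa only [h_int] using h

theorem summable_abs_mul_pow_div_factorial_of_abs_le_pow {c : ℕ → ℝ} {C : ℝ}
    (hc : ∀ n, |c n| ≤ C ^ n) (y : ℝ) :
    Summable fun n => |c n| * |y| ^ n / n.factorial := by
  refine (Real.summable_pow_div_factorial (C * |y|)).of_nonneg_of_le (fun _ => by positivity)
    fun n => ?_
  rw [mul_pow]
  gcongr
  exact hc n

theorem HasSum.comp_two_mul_add_one {α : Type*} [AddCommMonoid α] [TopologicalSpace α]
    {f : ℕ → α} {s : α} (hf : HasSum f s) (h_even : ∀ n, Even n → f n = 0) :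
    HasSum (fun k => f (2 * k + 1)) s := by
  have h_inj : Function.Injective fun k : ℕ => 2 * k + 1 := fun _ _ h => by simpa using h
  refine (h_inj.hasSum_iff fun n hn => h_even n ?_).mpr hf
  exact (Nat.even_or_odd n).resolve_right fun ⟨k, hk⟩ => hn ⟨k, hk.symm⟩

/-- Odd-index exponential generating function of `a`. -/
theorem egf_a_odd_eq_integral (x : ℝ) :
    HasSum (fun k : ℕ => (a (2 * k + 1) : ℝ) * x ^ (2 * k + 1) / (Nat.factorial (2 * k + 1) : ℝ))
      ((1 / 2) * ∫ t in Set.Ioi (0:ℝ),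
        (g (x * t) ^ 3 - g (-(x * t)) ^ 3) * Real.exp (-t)) := by
  set c : ℕ → ℝ := fun n => if Odd n then a n else 0
  have h_odd_part (y : ℝ) :
      HasSum (fun n => c n * y ^ n / (n.factorial : ℝ) ^ 2) ((g y ^ 3 - g (-y) ^ 3) / 2) := by
    refine (((hasSum_g_cube y).sub (hasSum_g_cube (-y))).div_const 2).congr_fun fun n => ?_
    rcases Nat.even_or_odd n with hn | hn
    · simp [c, hn.neg_pow, Nat.not_odd_iff_even.mpr hn]
    · simp only [c, hn.neg_pow, if_pos hn]
      ring
  have h_bound (n : ℕ) : |c n| ≤ 9 ^ n := by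
    have : (a n : ℝ) ≤ 9 ^ n := mod_cast a_le_nine_pow n
    by_cases hn : Odd n <;> simp [c, hn, this]
  have h := hasSum_integral_tsum_pow_div_factorial_sq_mul_exp_neg c x
    (summable_abs_mul_pow_div_factorial_of_abs_le_pow h_bound x)
  simp only [fun t => (h_odd_part (x * t)).tsum_eq, div_mul_eq_mul_div, integral_div] at h
  rw [one_div_mul_eq_div]
  refine (h.comp_two_mul_add_one fun n hn => ?_).congr_fun fun k => ?_
  · simp [c, Nat.not_odd_iff_even.mpr hn]
  · simp [c]
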